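/- arXiv:math/0411011 — 4 statements merged into one kernel-verified Lean document; each statement's English description precedes it below -/
import Mathlib

section
/- For every 0 ≤ a ≤ 1, the number |B(an)| of permutations σ of {1,…,n} with d(σ) ≤ ⌊an⌋ satisfies lim_{n→∞} log|B(an)| / (n log n) = a. -/
/-!
Let `B(n, m)` be the number of permutations of `Fin n` with `d ≤ m`. Writing a permutation of
`Fin (n + 1)` as `swap 0 p * e` with `e` fixing `0` (`Equiv.Perm.decomposeFin`), `d` goes up by
one exactly when `p ≠ 0`, so `B(n + 1, m + 1) = B(n, m + 1) + n B(n, m)`. This recursion gives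
`min(n, m + 1)! ≤ B(n, m) ≤ 2ⁿ (n + 1)ᵐ`, and both bounds have logarithm `m log n + O(n)`.
-/

open Filter Real

noncomputable section

/-- `d(σ)`: the minimal number of transpositions whose product is `σ`,
equal to `n` minus the number of cycles of `σ` (fixed points counting as cycles). -/
def permDist {n : ℕ} (σ : Equiv.Perm (Fin n)) : ℕ :=
  σ.cycleType.sum - σ.cycleType.card

open Equiv Equiv.Perm Finset
open scoped Nat

namespace Equiv.Perm

variable {α : Type*} [Fintype α] [DecidableEq α]

theorem two_mul_card_cycleType_le_sum (σ : Perm α) :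
    2 * Multiset.card σ.cycleType ≤ σ.cycleType.sum := by
  simpa [mul_comm] using Multiset.card_nsmul_le_sum fun _ => two_le_of_mem_cycleType (σ := σ)

/-- Splitting `a` off its cycle lowers `cycleType.sum - card cycleType` by exactly one: a
transposition cycle disappears, a longer cycle just gets shorter. -/
theorem cycleType_sum_add_card_swap_mul {τ : Perm α} {a : α} (ha : τ a ≠ a) :
    (swap a (τ a) * τ).cycleType.sum + Multiset.card τ.cycleType + 1 =
      τ.cycleType.sum + Multiset.card (swap a (τ a) * τ).cycleType := by
  set c := τ.cycleOf a
  have hc : c ∈ τ.cycleFactorsFinset :=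
    cycleOf_mem_cycleFactorsFinset_iff.mpr (mem_support.mpr ha)
  have hrc : Disjoint (τ * c⁻¹) c := disjoint_mul_inv_of_mem_cycleFactorsFinset hc
  have hτ : τ = c * (τ * c⁻¹) := by rw [← hrc.commute.eq, inv_mul_cancel_right]
  have hca : c a = τ a := cycleOf_apply_self τ a
  have hcyc : c.IsCycle := isCycle_cycleOf τ ha
  have hsplit : swap a (τ a) * τ = (swap a (c a) * c) * (τ * c⁻¹) := by
    rw [hca, mul_assoc, ← hτ]
  have hdisj : Disjoint (swap a (c a) * c) (τ * c⁻¹) :=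
    hrc.symm.mono (fun _ hy => (mem_support_swap_mul_imp_mem_support_ne hy).1) le_rfl
  rw [hsplit, hdisj.cycleType_mul, hτ, hrc.symm.cycleType_mul, ← hτ]
  simp only [Multiset.sum_add, Multiset.card_add]
  have hca' : c a ≠ a := hca ▸ ha
  by_cases hcc : c (c a) = a
  · rw [hcyc.eq_swap_of_apply_apply_eq_self hca' hcc, swap_apply_left, swap_mul_self,
      cycleType_one, (isCycle_swap hca'.symm).cycleType, card_support_swap hca'.symm]
    simp only [Multiset.sum_zero, Multiset.card_zero, Multiset.sum_singleton,
      Multiset.card_singleton]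
    omega
  · have hmem : a ∈ c.support := mem_support.mpr hca'
    rw [(hcyc.swap_mul hca' hcc).cycleType, hcyc.cycleType, support_swap_mul_eq c a hcc,
      sdiff_singleton_eq_erase, card_erase_of_mem hmem]
    have := card_pos.mpr ⟨a, hmem⟩
    simp only [Multiset.sum_singleton, Multiset.card_singleton]
    omega

theorem decomposeFin_symm_zero_eq_extendDomain {n : ℕ} (e : Perm (Fin n)) :
    decomposeFin.symm (0, e) = e.extendDomain (finSuccAboveEquiv 0) := by
  ext x
  refine Fin.cases ?_ (fun i => ?_) x
  · simp [extendDomain_apply_not_subtype]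
  · have h (j : Fin n) : (finSuccAboveEquiv (0 : Fin (n + 1)) j : Fin (n + 1)) = j.succ := rfl
    rw [decomposeFin_symm_apply_succ, swap_self, refl_apply, ← h, ← h, extendDomain_apply_image]

theorem decomposeFin_symm_eq_swap_mul {n : ℕ} (p : Fin (n + 1)) (e : Perm (Fin n)) :
    decomposeFin.symm (p, e) = swap 0 p * decomposeFin.symm (0, e) := by
  ext x
  refine Fin.cases ?_ (fun i => ?_) x <;> simp

end Equiv.Perm

theorem permDist_add_card_cycleType {n : ℕ} (σ : Perm (Fin n)) :
    permDist σ + Multiset.card σ.cycleType = σ.cycleType.sum := by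
  have := two_mul_card_cycleType_le_sum σ
  unfold permDist
  omega

theorem permDist_eq_zero_iff {n : ℕ} {σ : Perm (Fin n)} : permDist σ = 0 ↔ σ = 1 := by
  refine ⟨fun h => ?_, fun h => by simp [h, permDist]⟩
  have := two_mul_card_cycleType_le_sum σ
  have := permDist_add_card_cycleType σ
  rw [← card_cycleType_eq_zero]
  omega

theorem permDist_decomposeFin_symm {n : ℕ} (p : Fin (n + 1)) (e : Perm (Fin n)) :
    permDist (decomposeFin.symm (p, e)) = permDist e + if p = 0 then 0 else 1 := by
  have hE : (decomposeFin.symm (0, e)).cycleType = e.cycleType := by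
    rw [decomposeFin_symm_zero_eq_extendDomain, cycleType_extendDomain]
  rcases eq_or_ne p 0 with rfl | hp
  · simp only [permDist, hE, if_true, add_zero]
  · have hsplit : swap 0 p * decomposeFin.symm (p, e) = decomposeFin.symm (0, e) := by
      rw [decomposeFin_symm_eq_swap_mul p, ← mul_assoc, swap_mul_self, one_mul]
    have key := cycleType_sum_add_card_swap_mul (τ := decomposeFin.symm (p, e)) (a := 0)
      (by rwa [decomposeFin_symm_apply_zero])
    rw [decomposeFin_symm_apply_zero, hsplit, hE] at key
    have := permDist_add_card_cycleType (decomposeFin.symm (p, e))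
    have := permDist_add_card_cycleType e
    rw [if_neg hp]
    omega

def ballCard (n m : ℕ) : ℕ := #{σ : Perm (Fin n) | permDist σ ≤ m}

theorem one_le_ballCard (n m : ℕ) : 1 ≤ ballCard n m :=
  card_pos.mpr ⟨1, by simp [permDist]⟩

theorem ballCard_zero_left (m : ℕ) : ballCard 0 m = 1 :=
  le_antisymm ((card_filter_le _ _).trans (by simp)) (one_le_ballCard 0 m)

theorem ballCard_zero_right (n : ℕ) : ballCard n 0 = 1 := by
  simp [ballCard, permDist_eq_zero_iff, filter_eq']

theorem ballCard_succ_succ (n m : ℕ) :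
    ballCard (n + 1) (m + 1) = ballCard n (m + 1) + n * ballCard n m := by
  rw [ballCard, univ_perm_fin_succ, filter_map, card_map, card_filter, ← univ_product_univ,
    sum_product, Fin.sum_univ_succ]
  simp [permDist_decomposeFin_symm, Fin.succ_ne_zero, ballCard]

theorem factorial_min_le_ballCard (n m : ℕ) : (min n (m + 1))! ≤ ballCard n m := by
  induction n generalizing m with
  | zero => simpa using one_le_ballCard 0 m
  | succ n ih =>
    cases m with
    | zero => simpa using one_le_ballCard (n + 1) 0
    | succ m =>
      have h₁ := ih (m + 1)
      have h₂ := ih m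
      rw [ballCard_succ_succ]
      rcases le_or_gt n (m + 1) with hn | hn
      · rw [min_eq_left (by omega : n ≤ m + 1 + 1)] at h₁
        rw [min_eq_left hn] at h₂
        rw [min_eq_left (by omega : n + 1 ≤ m + 1 + 1), Nat.factorial_succ, Nat.succ_mul]
        linarith [Nat.mul_le_mul_left n h₂]
      · rw [min_eq_right (by omega : m + 1 + 1 ≤ n)] at h₁
        rw [min_eq_right (by omega : m + 1 + 1 ≤ n + 1)]
        omega

theorem ballCard_le (n m : ℕ) : ballCard n m ≤ 2 ^ n * (n + 1) ^ m := by
  induction n generalizing m with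
  | zero => simp [ballCard_zero_left]
  | succ n ih =>
    cases m with
    | zero => simp [ballCard_zero_right, Nat.one_le_two_pow]
    | succ m =>
      rw [ballCard_succ_succ]
      calc ballCard n (m + 1) + n * ballCard n m
          ≤ 2 ^ n * (n + 1) ^ (m + 1) + (n + 1) * (2 ^ n * (n + 1) ^ m) :=
            add_le_add (ih _) (Nat.mul_le_mul (Nat.le_succ n) (ih m))
        _ = 2 ^ (n + 1) * (n + 1) ^ (m + 1) := by ring
        _ ≤ 2 ^ (n + 1) * (n + 1 + 1) ^ (m + 1) := by gcongr; omega

theorem mul_log_sub_le_log_factorial (k n : ℕ) : k * log n - n ≤ log (k ! : ℝ) := by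
  rcases eq_or_ne k 0 with rfl | hk
  · simp
  rcases eq_or_ne n 0 with rfl | hn
  · simpa using log_nonneg (mod_cast Nat.one_le_iff_ne_zero.mpr (Nat.factorial_ne_zero k))
  have hk' : (0 : ℝ) < k := by positivity
  have hstirling := Stirling.le_log_factorial_stirling hk
  have hlogk : 0 ≤ log k := log_nonneg (mod_cast Nat.one_le_iff_ne_zero.mpr hk)
  have hlog2π : 0 ≤ log (2 * π) := log_nonneg (by linarith [pi_gt_three])
  have hratio : k * (log n - log k) ≤ n - k := by
    rw [← log_div (by positivity) hk'.ne']
    calc k * log (n / k) ≤ k * (n / k - 1) :=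
          mul_le_mul_of_nonneg_left (log_le_sub_one_of_pos (by positivity)) hk'.le
      _ = n - k := by field_simp
  linarith

theorem mul_log_sub_le_log_ballCard (n m : ℕ) :
    (min n (m + 1) : ℕ) * log n - n ≤ log (ballCard n m) :=
  (mul_log_sub_le_log_factorial _ n).trans <|
    log_le_log (by positivity) (mod_cast factorial_min_le_ballCard n m)

theorem log_ballCard_le {n m : ℕ} (hm : m ≤ n) : log (ballCard n m) ≤ m * log n + 2 * n := by
  have hlog : log (n + 1) ≤ log 2 + log n := by
    rcases eq_or_ne n 0 with rfl | hn
    · simpa using log_nonneg one_le_two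
    have : (1 : ℝ) ≤ n := mod_cast Nat.one_le_iff_ne_zero.mpr hn
    rw [← log_mul two_ne_zero (by positivity)]
    exact log_le_log (by positivity) (by linarith)
  have hlog2 : log 2 < 1 := log_two_lt_d9.trans (by norm_num)
  have hlog2' : 0 < log 2 := log_pos one_lt_two
  have hm' : (m : ℝ) ≤ n := mod_cast hm
  calc log (ballCard n m) ≤ log ((2 : ℝ) ^ n * (n + 1) ^ m) :=
        log_le_log (mod_cast one_le_ballCard n m) (mod_cast ballCard_le n m)
    _ = n * log 2 + m * log (n + 1) := by
        rw [log_mul (by positivity) (by positivity), log_pow, log_pow]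
    _ ≤ n * log 2 + m * (log 2 + log n) := by gcongr
    _ ≤ m * log n + 2 * n := by nlinarith

theorem tendsto_div_mul_log_of_abs_sub_le {f : ℕ → ℝ} {a c : ℝ}
    (h : ∀ᶠ n in atTop, |f n - a * n * log n| ≤ c * n) :
    Tendsto (fun n : ℕ => f n / (n * log n)) atTop (nhds a) := by
  rw [tendsto_iff_norm_sub_tendsto_zero]
  have hlog : Tendsto (fun n : ℕ => log n) atTop atTop :=
    tendsto_log_atTop.comp tendsto_natCast_atTop_atTop
  refine squeeze_zero' (Eventually.of_forall fun _ => norm_nonneg _) ?_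
    ((tendsto_const_nhds (x := c)).div_atTop hlog)
  filter_upwards [h, eventually_gt_atTop 1] with n hn hn1
  have hn1' : (1 : ℝ) < n := mod_cast hn1
  have hlogpos : 0 < log n := log_pos hn1'
  have hpos : 0 < (n : ℝ) * log n := mul_pos (by linarith) hlogpos
  have hsub : f n / (n * log n) - a = (f n - a * n * log n) / (n * log n) := by
    field_simp
  calc ‖f n / (n * log n) - a‖ = |f n - a * n * log n| / (n * log n) := by
        rw [hsub, Real.norm_eq_abs, abs_div, abs_of_pos hpos]
    _ ≤ c * n / (n * log n) := by gcongr
    _ = c / log n := by field_simp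

/-- `log |B(an)| / (n log n) → a` for `0 ≤ a ≤ 1`, where `B(an)` is the
ball of radius `⌊an⌋` around the identity in the transposition metric. -/
theorem statement2 (a : ℝ) (h0 : 0 ≤ a) (h1 : a ≤ 1) :
    Tendsto (fun n : ℕ =>
        Real.log (Nat.card {σ : Equiv.Perm (Fin n) // permDist σ ≤ ⌊a * (n : ℝ)⌋₊}) /
          ((n : ℝ) * Real.log n))
      atTop (nhds a) := by
  refine tendsto_div_mul_log_of_abs_sub_le (c := 2) (Eventually.of_forall fun n => ?_)
  set m := ⌊a * (n : ℝ)⌋₊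
  have hcard : Nat.card {σ : Perm (Fin n) // permDist σ ≤ m} = ballCard n m := by
    rw [Nat.card_eq_fintype_card, Fintype.card_subtype, ballCard]
  have han : a * n ≤ n := by nlinarith [(Nat.cast_nonneg n : (0 : ℝ) ≤ n)]
  have hm : (m : ℝ) ≤ a * n := Nat.floor_le (by positivity)
  have hk : a * n ≤ (min n (m + 1) : ℕ) := by
    push_cast
    exact le_min han (Nat.lt_floor_add_one _).le
  have hlogn : 0 ≤ log n := log_natCast_nonneg n
  have hlower := mul_log_sub_le_log_ballCard n m
  have hupper := log_ballCard_le (Nat.floor_le_of_le han : m ≤ n)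
  rw [hcard, abs_le]
  constructor <;> nlinarith [mul_le_mul_of_nonneg_right hk hlogn, mul_le_mul_of_nonneg_right hm hlogn]
end
end

section
/- Let (ζ_i)_{i≥1} be independent {0,1}-valued random variables with P(ζ_i = 1) = 1 − 1/i and P(ζ_i = 0) = 1/i, and let S_n = Σ_{i=1}^n ζ_i. Then for every 0 < a < 1, lim_{n→∞} log P(S_n ≤ a n) / (n log n) = a − 1. -/
/-!
Put `m = ⌊a n⌋` and `k = n - m`. The event `S_n ≤ m` contains the event that `ζ_i = 0` for all
`m < i ≤ n`, of probability `∏_{m < i ≤ n} 1/i ≥ n^{-k}`. Conversely, on `S_n ≤ m` at least `k`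
of the `ζ_i` vanish, so a union bound over the `k`-subsets of `{1, …, n}` bounds its probability
by the elementary symmetric sum `e_k(1, 1/2, …, 1/n) ≤ H_n^k / k! ≤ (1 + log n)^k / k!`.
Since `k ~ (1 - a) n` and `log k! ≥ k log k - k`, both bounds give `log P(S_n ≤ a n) =
-(1 - a) n log n + o(n log n)`.
-/

open MeasureTheory ProbabilityTheory Filter Real
open Finset
open scoped Nat Topology

namespace Finset

variable {ι : Type*} (s : Finset ι) {p : ι → ℝ}

/-- Double counting: each `(k + 1)`-set `U` is counted once for every `i ∈ U`, and erasing `i`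
embeds the `(k + 1)`-sets containing `i` into the `k`-sets. -/
theorem succ_mul_sum_powersetCard_succ_prod_le (hp : ∀ i ∈ s, 0 ≤ p i) (k : ℕ) :
    (k + 1 : ℝ) * ∑ U ∈ s.powersetCard (k + 1), ∏ i ∈ U, p i
      ≤ (∑ i ∈ s, p i) * ∑ T ∈ s.powersetCard k, ∏ i ∈ T, p i := by
  classical
  have hsplit : (k + 1 : ℝ) * ∑ U ∈ s.powersetCard (k + 1), ∏ i ∈ U, p i
      = ∑ i ∈ s, ∑ U ∈ (s.powersetCard (k + 1)).filter (i ∈ ·), p i * ∏ j ∈ U.erase i, p j := by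
    rw [mul_sum, ← sum_comm' (t := fun U => U)
      (s' := fun i => (s.powersetCard (k + 1)).filter (i ∈ ·))]
    · refine sum_congr rfl fun U hU => ?_
      rw [sum_congr rfl fun i hi => mul_prod_erase U p hi, sum_const,
        (mem_powersetCard.mp hU).2, nsmul_eq_mul]
      push_cast; rfl
    · intro U i
      simp only [mem_filter, mem_powersetCard]
      exact ⟨fun ⟨h, hi⟩ => ⟨⟨h, hi⟩, h.1 hi⟩, fun ⟨h, _⟩ => h⟩
  rw [hsplit, sum_mul]
  refine sum_le_sum fun i hi => ?_
  rw [← mul_sum]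
  refine mul_le_mul_of_nonneg_left ?_ (hp i hi)
  have herase :
      Set.InjOn (fun U : Finset ι => U.erase i) ((s.powersetCard (k + 1)).filter (i ∈ ·)) :=
    fun U hU V hV => erase_injOn' i (mem_filter.mp hU).2 (mem_filter.mp hV).2
  rw [← sum_image (f := fun T => ∏ j ∈ T, p j) herase]
  refine sum_le_sum_of_subset_of_nonneg ?_ fun T hT _ =>
    prod_nonneg fun j hj => hp j ((mem_powersetCard.mp hT).1 hj)
  simp only [subset_iff, mem_image, mem_filter, mem_powersetCard]
  rintro _ ⟨U, ⟨⟨hUs, hcard⟩, hiU⟩, rfl⟩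
  exact ⟨(U.erase_subset i).trans hUs, by rw [card_erase_of_mem hiU, hcard]; rfl⟩

theorem factorial_mul_sum_powersetCard_prod_le (hp : ∀ i ∈ s, 0 ≤ p i) (k : ℕ) :
    (k ! : ℝ) * ∑ T ∈ s.powersetCard k, ∏ i ∈ T, p i ≤ (∑ i ∈ s, p i) ^ k := by
  induction k with
  | zero => simp
  | succ k ih =>
    calc ((k + 1)! : ℝ) * ∑ T ∈ s.powersetCard (k + 1), ∏ i ∈ T, p i
        = k ! * ((k + 1 : ℝ) * ∑ T ∈ s.powersetCard (k + 1), ∏ i ∈ T, p i) := by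
          push_cast [Nat.factorial_succ]; ring
      _ ≤ k ! * ((∑ i ∈ s, p i) * ∑ T ∈ s.powersetCard k, ∏ i ∈ T, p i) := by
          gcongr _ * ?_; exact succ_mul_sum_powersetCard_succ_prod_le s hp k
      _ = (∑ i ∈ s, p i) * (k ! * ∑ T ∈ s.powersetCard k, ∏ i ∈ T, p i) := by ring
      _ ≤ (∑ i ∈ s, p i) * (∑ i ∈ s, p i) ^ k := by
          gcongr; exact sum_nonneg hp
      _ = (∑ i ∈ s, p i) ^ (k + 1) := by ring

variable {x : ι → ℕ}

theorem exists_mem_powersetCard_forall_eq_zero_of_sum_le (hx : ∀ i, x i ≤ 1) {m : ℕ}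
    (h : ∑ i ∈ s, x i ≤ m) : ∃ T ∈ s.powersetCard (#s - m), ∀ i ∈ T, x i = 0 := by
  classical
  have hsum : ∑ i ∈ s, x i = #(s.filter fun i => ¬x i = 0) := by
    rw [card_filter]
    exact sum_congr rfl fun i _ => by have := hx i; split_ifs <;> omega
  have hcard : #s - m ≤ #(s.filter (x · = 0)) := by
    have := card_filter_add_card_filter_not (s := s) (x · = 0)
    omega
  obtain ⟨T, hT, hTcard⟩ := exists_subset_card_eq hcard
  exact ⟨T, mem_powersetCard.mpr ⟨hT.trans (filter_subset _ _), hTcard⟩,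
    fun i hi => (mem_filter.mp (hT hi)).2⟩

theorem sum_le_card_sdiff_of_forall_eq_zero [DecidableEq ι] (hx : ∀ i, x i ≤ 1)
    {T : Finset ι} (hT : T ⊆ s) (hzero : ∀ i ∈ T, x i = 0) : ∑ i ∈ s, x i ≤ #(s \ T) := by
  rw [← sum_sdiff hT, sum_eq_zero hzero, add_zero]
  simpa using sum_le_card_nsmul (s \ T) x 1 fun i _ => hx i

end Finset

section Bernoulli

variable {Ω ι : Type*} [MeasurableSpace Ω] {P : Measure Ω} {ζ : ι → Ω → ℕ}

theorem ProbabilityTheory.iIndepFun.measureReal_biInter_eq_zero (hindep : iIndepFun ζ P)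
    (T : Finset ι) :
    P.real (⋂ i ∈ T, {ω | ζ i ω = 0}) = ∏ i ∈ T, P.real {ω | ζ i ω = 0} := by
  rw [measureReal_def, hindep.meas_biInter (s := fun i => {ω | ζ i ω = 0})
    fun i _ => ⟨{0}, measurableSet_singleton 0, rfl⟩, ENNReal.toReal_prod]
  rfl

theorem prod_measureReal_eq_zero_le_measureReal_sum_le [IsFiniteMeasure P] [DecidableEq ι]
    (hindep : iIndepFun ζ P) (hval : ∀ i ω, ζ i ω ≤ 1) {s T : Finset ι} (hT : T ⊆ s) {m : ℕ}
    (hm : #(s \ T) ≤ m) :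
    ∏ i ∈ T, P.real {ω | ζ i ω = 0} ≤ P.real {ω | ∑ i ∈ s, ζ i ω ≤ m} := by
  rw [← hindep.measureReal_biInter_eq_zero]
  refine measureReal_mono fun ω hω => ?_
  simp only [Set.mem_iInter] at hω
  exact (s.sum_le_card_sdiff_of_forall_eq_zero (hval · ω) hT hω).trans hm

theorem measureReal_sum_le_le [IsFiniteMeasure P] (hindep : iIndepFun ζ P)
    (hval : ∀ i ω, ζ i ω ≤ 1) (s : Finset ι) (m : ℕ) :
    P.real {ω | ∑ i ∈ s, ζ i ω ≤ m}
      ≤ (∑ i ∈ s, P.real {ω | ζ i ω = 0}) ^ (#s - m) / (#s - m)! := by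
  have hcover : {ω | ∑ i ∈ s, ζ i ω ≤ m}
      ⊆ ⋃ T ∈ s.powersetCard (#s - m), ⋂ i ∈ T, {ω | ζ i ω = 0} := fun ω hω => by
    obtain ⟨T, hT, hzero⟩ :=
      s.exists_mem_powersetCard_forall_eq_zero_of_sum_le (hval · ω) hω
    simpa only [Set.mem_iUnion, Set.mem_iInter] using ⟨T, hT, hzero⟩
  rw [le_div_iff₀ (by positivity), mul_comm]
  calc ((#s - m)! : ℝ) * P.real {ω | ∑ i ∈ s, ζ i ω ≤ m}
      ≤ (#s - m)! * ∑ T ∈ s.powersetCard (#s - m), ∏ i ∈ T, P.real {ω | ζ i ω = 0} := by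
        gcongr
        refine (measureReal_mono hcover (measure_ne_top _ _)).trans ?_
        simp only [← hindep.measureReal_biInter_eq_zero]
        exact measureReal_biUnion_finset_le _ _
    _ ≤ (∑ i ∈ s, P.real {ω | ζ i ω = 0}) ^ (#s - m) :=
        s.factorial_mul_sum_powersetCard_prod_le (fun _ _ => measureReal_nonneg) _

end Bernoulli

section HarmonicBernoulli

variable {Ω : Type*} [MeasurableSpace Ω] {P : Measure Ω} [IsFiniteMeasure P] {ζ : ℕ → Ω → ℕ}

theorem inv_pow_le_measureReal_sum_Icc_le (hindep : iIndepFun ζ P) (hval : ∀ i ω, ζ i ω ≤ 1)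
    (hzero : ∀ i, 1 ≤ i → P.real {ω | ζ i ω = 0} = (i : ℝ)⁻¹) (m n : ℕ) :
    (n : ℝ)⁻¹ ^ (n - m) ≤ P.real {ω | ∑ i ∈ Icc 1 n, ζ i ω ≤ m} := by
  have hsub : Ioc m n ⊆ Icc 1 n := fun i hi => by
    simp only [mem_Ioc, mem_Icc] at hi ⊢; omega
  have hcompl : #(Icc 1 n \ Ioc m n) ≤ m := by
    calc #(Icc 1 n \ Ioc m n) ≤ #(Icc 1 m) := card_le_card fun i hi => by
          simp only [Finset.mem_sdiff, mem_Icc, mem_Ioc] at hi ⊢; omega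
      _ = m := by simp
  refine le_trans ?_ (prod_measureReal_eq_zero_le_measureReal_sum_le hindep hval hsub hcompl)
  rw [← Nat.card_Ioc m n, ← prod_const]
  refine prod_le_prod (fun _ _ => by positivity) fun i hi => ?_
  obtain ⟨hmi, hin⟩ := mem_Ioc.mp hi
  rw [hzero i (by omega)]
  exact inv_anti₀ (by exact_mod_cast (by omega : 0 < i)) (by exact_mod_cast hin)

theorem measureReal_sum_Icc_le_le (hindep : iIndepFun ζ P) (hval : ∀ i ω, ζ i ω ≤ 1)
    (hzero : ∀ i, 1 ≤ i → P.real {ω | ζ i ω = 0} = (i : ℝ)⁻¹) (m n : ℕ) :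
    P.real {ω | ∑ i ∈ Icc 1 n, ζ i ω ≤ m} ≤ (1 + log n) ^ (n - m) / (n - m)! := by
  have hharmonic : ∑ i ∈ Icc 1 n, P.real {ω | ζ i ω = 0} ≤ 1 + log n := by
    rw [sum_congr rfl fun i hi => hzero i (mem_Icc.mp hi).1]
    simpa [harmonic_eq_sum_Icc] using harmonic_le_one_add_log n
  have := measureReal_sum_le_le hindep hval (Icc 1 n) m
  rw [Nat.card_Icc, Nat.add_sub_cancel] at this
  refine this.trans ?_
  gcongr

end HarmonicBernoulli

theorem natCast_mul_log_sub_le_log_factorial (k : ℕ) : k * log k - k ≤ log (k ! : ℝ) := by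
  have hfac : (0 : ℝ) < k ! := by exact_mod_cast k.factorial_pos
  have h : (k : ℝ) ^ k ≤ k ! * exp k := by
    rw [← div_le_iff₀' hfac]
    exact pow_div_factorial_le_exp _ (Nat.cast_nonneg k) k
  rcases k.eq_zero_or_pos with rfl | hk
  · simp
  have := log_le_log (by positivity) h
  rw [log_pow, log_mul hfac.ne' (exp_ne_zero _), log_exp] at this
  linarith

theorem tendsto_log_one_add_log_div_log :
    Tendsto (fun x : ℝ => log (1 + log x) / log x) atTop (𝓝 0) := by
  have hlog : Tendsto (fun x : ℝ => 1 + log x) atTop atTop :=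
    tendsto_atTop_add_const_left _ 1 tendsto_log_atTop
  have hratio : Tendsto (fun x : ℝ => (1 + log x) / log x) atTop (𝓝 1) := by
    have := (tendsto_inv_atTop_zero.comp tendsto_log_atTop).const_add 1
    rw [add_zero] at this
    refine this.congr' ?_
    filter_upwards [tendsto_log_atTop.eventually_ne_atTop 0] with x hx
    simp [add_div, div_self hx, add_comm]
  have := (isLittleO_log_id_atTop.tendsto_div_nhds_zero.comp hlog).mul hratio
  rw [zero_mul] at this
  refine this.congr' ?_
  filter_upwards [hlog.eventually_ne_atTop 0] with x hx
  simp only [Function.comp, id]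
  field_simp

theorem tendsto_log_div_log_of_tendsto_div {u : ℕ → ℝ} {c : ℝ} (hc : 0 < c)
    (hu : Tendsto (fun n => u n / n) atTop (𝓝 c)) :
    Tendsto (fun n => log (u n) / log n) atTop (𝓝 1) := by
  have hlogn : Tendsto (fun n : ℕ => log n) atTop atTop :=
    tendsto_log_atTop.comp tendsto_natCast_atTop_atTop
  have := ((hu.log hc.ne').div_atTop hlogn).add_const 1
  rw [zero_add] at this
  refine this.congr' ?_
  filter_upwards [hu.eventually (lt_mem_nhds hc), hlogn.eventually_gt_atTop 0,
    eventually_gt_atTop 0] with n hun hlog hn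
  have hn' : (n : ℝ) ≠ 0 := by positivity
  have hu0 : u n ≠ 0 := by rintro h; simp [h] at hun
  rw [log_div hu0 hn', sub_div, div_self hlog.ne']
  ring

theorem tendsto_log_div_mul_log_of_le_of_le {c : ℝ} (hc : 0 < c) {k : ℕ → ℕ}
    (hk : Tendsto (fun n => (k n : ℝ) / n) atTop (𝓝 c)) {p : ℕ → ℝ}
    (hlow : ∀ᶠ n : ℕ in atTop, (n : ℝ)⁻¹ ^ k n ≤ p n)
    (hup : ∀ᶠ n : ℕ in atTop, p n ≤ (1 + log n) ^ k n / (k n)!) :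
    Tendsto (fun n => log (p n) / (n * log n)) atTop (𝓝 (-c)) := by
  have hlogn : Tendsto (fun n : ℕ => log n) atTop atTop :=
    tendsto_log_atTop.comp tendsto_natCast_atTop_atTop
  have hupper : Tendsto (fun n => (k n : ℝ) / n *
      (log (1 + log n) / log n + (log n)⁻¹ - log (k n) / log n)) atTop (𝓝 (-c)) := by
    have := hk.mul (((tendsto_log_one_add_log_div_log.comp tendsto_natCast_atTop_atTop).add
      (tendsto_inv_atTop_zero.comp hlogn)).sub (tendsto_log_div_log_of_tendsto_div hc hk))
    simpa using this
  refine tendsto_of_tendsto_of_tendsto_of_le_of_le' hk.neg hupper ?_ ?_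
  · filter_upwards [hlow, eventually_gt_atTop 1] with n hp hn
    have hn1 : (1 : ℝ) < n := by exact_mod_cast hn
    have hlog : 0 < log n := log_pos hn1
    have := log_le_log (by positivity) hp
    rw [log_pow, log_inv] at this
    rw [le_div_iff₀ (by positivity)]
    field_simp
    linarith
  · filter_upwards [hlow, hup, eventually_gt_atTop 1] with n hp hp' hn
    have hn1 : (1 : ℝ) < n := by exact_mod_cast hn
    have hlog : 0 < log n := log_pos hn1
    have hfac : (0 : ℝ) < (k n)! := by exact_mod_cast (k n).factorial_pos
    have hH : 0 < 1 + log n := by linarith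
    have := log_le_log ((by positivity : (0 : ℝ) < (n : ℝ)⁻¹ ^ k n).trans_le hp) hp'
    rw [log_div (by positivity) hfac.ne', log_pow] at this
    have := natCast_mul_log_sub_le_log_factorial (k n)
    rw [div_le_iff₀ (by positivity)]
    field_simp
    linarith

theorem statement3_general {Ω : Type*} [MeasurableSpace Ω] (P : Measure Ω) [IsProbabilityMeasure P]
    (ζ : ℕ → Ω → ℕ)
    (hval : ∀ i ω, ζ i ω ≤ 1)
    (hindep : iIndepFun ζ P)
    (hzero : ∀ i : ℕ, 1 ≤ i → P {ω | ζ i ω = 0} = ENNReal.ofReal (1 / (i : ℝ)))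
    (a : ℝ) (ha : 0 < a) (ha1 : a < 1) :
    Tendsto (fun n : ℕ =>
        Real.log ((P {ω | ((∑ i ∈ Finset.Icc 1 n, ζ i ω : ℕ) : ℝ) ≤ a * n}).toReal) /
          ((n : ℝ) * Real.log n))
      atTop (nhds (a - 1)) := by
  have hzero' : ∀ i, 1 ≤ i → P.real {ω | ζ i ω = 0} = (i : ℝ)⁻¹ := fun i hi => by
    rw [measureReal_def, hzero i hi, one_div, ENNReal.toReal_ofReal (by positivity)]
  set m : ℕ → ℕ := fun n => ⌊a * n⌋₊
  have hmn : ∀ n, m n ≤ n := fun n =>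
    Nat.floor_le_of_le (by nlinarith [n.cast_nonneg (α := ℝ)])
  have hk : Tendsto (fun n => ((n - m n : ℕ) : ℝ) / n) atTop (𝓝 (1 - a)) := by
    refine ((tendsto_nat_floor_mul_div_atTop ha.le).comp tendsto_natCast_atTop_atTop).const_sub 1
      |>.congr' ?_
    filter_upwards [eventually_gt_atTop 0] with n hn
    rw [Function.comp_apply, Nat.cast_sub (hmn n)]
    field_simp
    rfl
  have hevent : ∀ n : ℕ, {ω | ((∑ i ∈ Icc 1 n, ζ i ω : ℕ) : ℝ) ≤ a * n}
      = {ω | ∑ i ∈ Icc 1 n, ζ i ω ≤ m n} := fun n => by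
    ext ω; exact (Nat.le_floor_iff (mul_nonneg ha.le n.cast_nonneg)).symm
  have := tendsto_log_div_mul_log_of_le_of_le (sub_pos.2 ha1) hk
    (Eventually.of_forall fun n => inv_pow_le_measureReal_sum_Icc_le hindep hval hzero' (m n) n)
    (Eventually.of_forall fun n => measureReal_sum_Icc_le_le hindep hval hzero' (m n) n)
  simpa only [hevent, measureReal_def, neg_sub] using this

/-- if `ζ_i` are independent Bernoulli with `P(ζ_i = 1) = 1 - 1/i` and
`S_n = Σ_{i=1}^n ζ_i`, then `log P(S_n ≤ an) / (n log n) → a - 1` for `0 < a < 1`. -/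
theorem statement3 {Ω : Type*} [MeasurableSpace Ω] (P : Measure Ω) [IsProbabilityMeasure P]
    (ζ : ℕ → Ω → ℕ)
    (hval : ∀ i ω, ζ i ω ≤ 1)
    (hindep : iIndepFun ζ P)
    (hone : ∀ i : ℕ, 1 ≤ i → P {ω | ζ i ω = 1} = ENNReal.ofReal (1 - 1 / (i : ℝ)))
    (hzero : ∀ i : ℕ, 1 ≤ i → P {ω | ζ i ω = 0} = ENNReal.ofReal (1 / (i : ℝ)))
    (a : ℝ) (ha : 0 < a) (ha1 : a < 1) :
    Tendsto (fun n : ℕ =>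
        Real.log ((P {ω | ((∑ i ∈ Finset.Icc 1 n, ζ i ω : ℕ) : ℝ) ≤ a * n}).toReal) /
          ((n : ℝ) * Real.log n))
      atTop (nhds (a - 1)) :=
  statement3_general P ζ hval hindep hzero a ha ha1
end

section
/- For every x > 0, u(x) > 1 − x/(e^x − 1). -/
/-!
With `T(t) = ∑ n^(n-2) tⁿ / n!`, the exponential generating function of labelled trees, we have
`u c = 1 - T(c e^{-c}) / c`, and `T(y e^{-y}) = y - y²/2` for `0 ≤ y ≤ 1`. For small `y` this
identity comes from expanding every `e^{-ny}` and summing the absolutely convergent double series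
along antidiagonals: the coefficient of `y^N` is `(1/N!)` times the `N`-th forward difference of
`n ↦ n^(N-2)`, which vanishes for `N ≥ 3`. Analyticity of `T` on `|t| < 1/e` and its continuity on
`|t| ≤ 1/e` extend the identity to `[0, 1]`.

For `x < 1` take `y = x`; for `x ≥ 1` pick `y ∈ (0, 1]` with `y e^{-y} = x e^{-x}`. Then
`u x = 1 - (y - y²/2)/x`, and the claim becomes `(y - y²/2)(e^x - 1) < x²`. This follows from the
elementary bound `(2 - y) e^y < 2 + y` together with `(x - y)(2x + y - 2) ≥ 0`.
-/

open Filter Real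

noncomputable section

/-- The function `u` of Theorem 0: `u(c) = 1 - Σ_{k≥1} (1/c) (k^{k-2}/k!) (c e^{-c})^k`. -/
def u : ℝ → ℝ := fun c =>
  1 - ∑' k : ℕ, (1 / c) * (((k : ℝ) + 1) ^ ((k : ℤ) - 1) / (Nat.factorial (k + 1))) *
      (c * Real.exp (-c)) ^ (k + 1)

open Finset
open scoped Nat

theorem HasSum.sum_antidiagonal {E : Type*} [AddCommMonoid E] [TopologicalSpace E]
    [ContinuousAdd E] [RegularSpace E] {f : ℕ × ℕ → E} {a : E} (h : HasSum f a) :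
    HasSum (fun n ↦ ∑ p ∈ antidiagonal n, f p) a :=
  (HasAntidiagonal.sigmaAntidiagonalEquivProd.hasSum_iff.2 h).sigma fun n ↦ by
    rw [← Finset.sum_coe_sort]; exact hasSum_fintype _

theorem Real.hasSum_pow_div_factorial (x : ℝ) : HasSum (fun n ↦ x ^ n / n !) (exp x) := by
  rw [exp_eq_exp_ℝ]
  exact NormedSpace.expSeries_div_hasSum_exp x

/-- `treeCoeff n = n^(n-2) / n!`, written so that division by zero gives `treeCoeff 0 = 0`. -/
def treeCoeff (n : ℕ) : ℝ := (n : ℝ) ^ n / ((n : ℝ) ^ 2 * n !)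

def treeSeries (t : ℝ) : ℝ := ∑' n, treeCoeff n * t ^ n

lemma treeCoeff_nonneg (n : ℕ) : 0 ≤ treeCoeff n := by
  unfold treeCoeff; positivity

lemma treeCoeff_le (n : ℕ) : treeCoeff n ≤ exp n / n ^ 2 := by
  rw [treeCoeff, div_mul_eq_div_div_swap]
  exact div_le_div_of_nonneg_right (pow_div_factorial_le_exp _ n.cast_nonneg n) (by positivity)

lemma norm_treeCoeff_mul_pow_le {t : ℝ} (ht : |t| ≤ exp (-1)) (n : ℕ) :
    ‖treeCoeff n * t ^ n‖ ≤ 1 / n ^ 2 :=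
  calc ‖treeCoeff n * t ^ n‖ = treeCoeff n * |t| ^ n := by
        rw [norm_mul, norm_pow, Real.norm_of_nonneg (treeCoeff_nonneg n), Real.norm_eq_abs]
    _ ≤ exp n / n ^ 2 * exp (-1) ^ n := by gcongr; exact treeCoeff_le n
    _ = 1 / n ^ 2 := by
        rw [← exp_nat_mul, div_mul_eq_mul_div, ← exp_add]
        simp

lemma exp_neg_one_le_radius_treeCoeff :
    ENNReal.ofReal (exp (-1)) ≤ (FormalMultilinearSeries.ofScalars ℝ treeCoeff).radius := by
  refine FormalMultilinearSeries.le_radius_of_bound _ 1 fun n ↦ ?_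
  rw [FormalMultilinearSeries.ofScalars_norm, Real.coe_toNNReal _ (exp_pos _).le]
  have := norm_treeCoeff_mul_pow_le (t := exp (-1)) (abs_of_pos (exp_pos _)).le n
  rw [norm_mul, norm_pow, Real.norm_of_nonneg (exp_pos _).le] at this
  refine this.trans ?_
  rcases n.eq_zero_or_pos with rfl | hn
  · simp
  · exact div_le_one_of_le₀ (one_le_pow₀ (by exact_mod_cast hn)) (by positivity)

lemma analyticAt_treeSeries {t : ℝ} (ht : |t| < exp (-1)) : AnalyticAt ℝ treeSeries t := by
  have hsum : treeSeries = (FormalMultilinearSeries.ofScalars ℝ treeCoeff).sum := funext fun t ↦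
    (FormalMultilinearSeries.ofScalars_sum_eq (E := ℝ) treeCoeff t).symm
  have hrad := exp_neg_one_le_radius_treeCoeff
  rw [hsum]
  refine ((FormalMultilinearSeries.ofScalars ℝ treeCoeff).hasFPowerSeriesOnBall
    ((ENNReal.ofReal_pos.2 (exp_pos _)).trans_le hrad)).analyticAt_of_mem ?_
  rw [Metric.mem_eball, edist_zero_right, ← ofReal_norm, Real.norm_eq_abs]
  exact ((ENNReal.ofReal_lt_ofReal_iff (exp_pos _)).2 ht).trans_le hrad

lemma continuousOn_treeSeries : ContinuousOn treeSeries {t | |t| ≤ exp (-1)} :=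
  continuousOn_tsum (fun n ↦ by fun_prop) (Real.summable_one_div_nat_pow.2 one_lt_two)
    fun n _ ht ↦ norm_treeCoeff_mul_pow_le ht n

lemma sum_range_treeCoeff_mul_neg_pow_div_factorial {N : ℕ} (hN : 3 ≤ N) :
    ∑ n ∈ range (N + 1), treeCoeff n * (-(n : ℝ)) ^ (N - n) / (N - n)! = 0 := by
  have hΔ := congr_fun (fwdDiff_iter_pow_eq_zero_of_lt (R := ℝ) (show N - 2 < N by omega)) 0
  simp only [fwdDiff_iter_eq_sum_shift, zero_add, nsmul_one, Pi.zero_apply, zsmul_eq_mul,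
    Int.cast_mul, Int.cast_pow, Int.cast_neg, Int.cast_one, Int.cast_natCast] at hΔ
  rw [← zero_div (N ! : ℝ), ← hΔ, sum_div]
  refine sum_congr rfl fun n hn ↦ ?_
  have hnN : n ≤ N := Nat.lt_succ_iff.mp (mem_range.mp hn)
  rcases n.eq_zero_or_pos with rfl | hn0
  · simp [treeCoeff, zero_pow (show N - 2 ≠ 0 by omega)]
  have hfac : (N ! : ℝ) = N.choose n * n ! * (N - n)! := by
    exact_mod_cast (Nat.choose_mul_factorial_mul_factorial hnN).symm
  have hpow : (n : ℝ) ^ n * (n : ℝ) ^ (N - n) = (n : ℝ) ^ 2 * (n : ℝ) ^ (N - 2) := by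
    rw [← pow_add, ← pow_add]; congr 1; omega
  have hchoose : (N.choose n : ℝ) ≠ 0 := by exact_mod_cast (Nat.choose_pos hnN).ne'
  rw [treeCoeff, neg_eq_neg_one_mul, mul_pow, hfac]
  field_simp
  exact hpow

def treeDoubleTerm (x : ℝ) (p : ℕ × ℕ) : ℝ :=
  treeCoeff p.1 * x ^ p.1 * ((-(p.1 : ℝ) * x) ^ p.2 / p.2 !)

lemma hasSum_treeDoubleTerm_fiber (x : ℝ) (n : ℕ) :
    HasSum (fun j ↦ treeDoubleTerm x (n, j)) (treeCoeff n * (x * exp (-x)) ^ n) := by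
  have h := (Real.hasSum_pow_div_factorial (-(n : ℝ) * x)).mul_left (treeCoeff n * x ^ n)
  rwa [show exp (-(n : ℝ) * x) = exp (-x) ^ n by rw [← exp_nat_mul]; ring_nf, mul_assoc,
    ← mul_pow] at h

lemma summable_treeDoubleTerm {x : ℝ} (hx0 : 0 ≤ x) (hx : x * exp x ≤ exp (-1)) :
    Summable (treeDoubleTerm x) := by
  set g : ℕ × ℕ → ℝ := fun p ↦ treeCoeff p.1 * x ^ p.1 * (((p.1 : ℝ) * x) ^ p.2 / p.2 !)
  have hg_fiber (n : ℕ) : HasSum (fun j ↦ g (n, j)) (treeCoeff n * (x * exp x) ^ n) := by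
    have h := (Real.hasSum_pow_div_factorial ((n : ℝ) * x)).mul_left (treeCoeff n * x ^ n)
    rwa [exp_nat_mul, mul_assoc, ← mul_pow] at h
  have hg : Summable g := by
    refine (summable_prod_of_nonneg fun p ↦
      mul_nonneg (mul_nonneg (treeCoeff_nonneg _) (by positivity)) (by positivity)).2
      ⟨fun n ↦ (hg_fiber n).summable, ?_⟩
    refine .of_norm_bounded (Real.summable_one_div_nat_pow.2 one_lt_two) fun n ↦ ?_
    rw [(hg_fiber n).tsum_eq]
    exact norm_treeCoeff_mul_pow_le ((abs_of_nonneg (by positivity)).trans_le hx) n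
  refine hg.of_norm_bounded fun p ↦ le_of_eq ?_
  simp only [treeDoubleTerm, g, norm_mul, norm_div, norm_pow, norm_neg, Real.norm_natCast,
    Real.norm_of_nonneg (treeCoeff_nonneg _), Real.norm_of_nonneg hx0]

lemma sum_antidiagonal_treeDoubleTerm (x : ℝ) (N : ℕ) :
    ∑ p ∈ antidiagonal N, treeDoubleTerm x p =
      (∑ n ∈ range (N + 1), treeCoeff n * (-(n : ℝ)) ^ (N - n) / (N - n)!) * x ^ N := by
  rw [Nat.sum_antidiagonal_eq_sum_range_succ_mk, sum_mul]
  refine sum_congr rfl fun n hn ↦ ?_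
  have hxN : x ^ n * x ^ (N - n) = x ^ N := by
    rw [← pow_add, Nat.add_sub_cancel' (Nat.lt_succ_iff.mp (mem_range.mp hn))]
  rw [treeDoubleTerm, mul_pow, ← hxN]
  ring

lemma hasSum_sum_antidiagonal_treeDoubleTerm (x : ℝ) :
    HasSum (fun N ↦ ∑ p ∈ antidiagonal N, treeDoubleTerm x p) (x - x ^ 2 / 2) := by
  have hsupp : ∀ N ∉ range 3, ∑ p ∈ antidiagonal N, treeDoubleTerm x p = 0 := fun N hN ↦ by
    rw [sum_antidiagonal_treeDoubleTerm,
      sum_range_treeCoeff_mul_neg_pow_div_factorial (by simpa using hN), zero_mul]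
  have hval : ∑ N ∈ range 3, ∑ p ∈ antidiagonal N, treeDoubleTerm x p = x - x ^ 2 / 2 := by
    simp only [sum_antidiagonal_treeDoubleTerm, sum_range_succ, sum_range_zero, treeCoeff]
    norm_num
    ring
  exact hval ▸ hasSum_sum_of_ne_finset_zero hsupp

lemma treeSeries_mul_exp_neg_of_mul_exp_le {x : ℝ} (hx0 : 0 ≤ x) (hx : x * exp x ≤ exp (-1)) :
    treeSeries (x * exp (-x)) = x - x ^ 2 / 2 := by
  have hS := (summable_treeDoubleTerm hx0 hx).hasSum
  rw [treeSeries, (hS.prod_fiberwise (hasSum_treeDoubleTerm_fiber x)).tsum_eq]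
  exact hS.sum_antidiagonal.unique (hasSum_sum_antidiagonal_treeDoubleTerm x)

lemma mul_exp_neg_lt_exp_neg_one {y : ℝ} (hy : y ≠ 1) : y * exp (-y) < exp (-1) :=
  calc y * exp (-y) < exp (y - 1) * exp (-y) := by
        gcongr; linarith [add_one_lt_exp (sub_ne_zero.2 hy)]
    _ = exp (-1) := by rw [← exp_add]; ring_nf

lemma mul_exp_le_exp_neg_one {x : ℝ} (hx0 : 0 ≤ x) (hx : x ≤ 1 / 9) : x * exp x ≤ exp (-1) := by
  have he : exp (x + 1) ≤ exp 1 ^ 2 := by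
    rw [← exp_nat_mul]; gcongr; push_cast; linarith
  have h3 := exp_one_lt_three
  rw [exp_neg, ← one_div, le_div_iff₀ (exp_pos 1), mul_assoc, ← exp_add]
  nlinarith [exp_pos 1, exp_pos (x + 1)]

lemma treeSeries_mul_exp_neg_of_mem_Ioo {y : ℝ} (hy : y ∈ Set.Ioo 0 1) :
    treeSeries (y * exp (-y)) = y - y ^ 2 / 2 := by
  have hf : AnalyticOnNhd ℝ (fun z ↦ treeSeries (z * exp (-z))) (Set.Ioo 0 1) := fun z hz ↦ by
    have hz' : |z * exp (-z)| < exp (-1) := by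
      rw [abs_of_pos (by have := hz.1; positivity)]
      exact mul_exp_neg_lt_exp_neg_one hz.2.ne
    exact (analyticAt_treeSeries hz').comp (f := fun z ↦ z * exp (-z)) (by fun_prop)
  have hg : AnalyticOnNhd ℝ (fun z : ℝ ↦ z - z ^ 2 / 2) (Set.Ioo 0 1) := fun z _ ↦ by fun_prop
  refine hf.eqOn_of_preconnected_of_eventuallyEq hg isPreconnected_Ioo
    (z₀ := 1 / 18) (by norm_num) ?_ hy
  filter_upwards [Ioo_mem_nhds (show (0 : ℝ) < 1 / 18 by norm_num)
    (show (1 / 18 : ℝ) < 1 / 9 by norm_num)] with z hz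
  exact treeSeries_mul_exp_neg_of_mul_exp_le hz.1.le (mul_exp_le_exp_neg_one hz.1.le hz.2.le)

lemma treeSeries_mul_exp_neg {y : ℝ} (hy : y ∈ Set.Icc 0 1) :
    treeSeries (y * exp (-y)) = y - y ^ 2 / 2 := by
  have hcont : ContinuousOn (fun z ↦ treeSeries (z * exp (-z))) (Set.Icc 0 1) :=
    continuousOn_treeSeries.comp (by fun_prop) fun z hz ↦
      (abs_of_nonneg (mul_nonneg hz.1 (exp_pos _).le)).trans_le (mul_exp_neg_le_exp_neg_one z)
  refine Set.EqOn.of_subset_closure (fun z hz ↦ treeSeries_mul_exp_neg_of_mem_Ioo hz) hcont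
    (by fun_prop) Set.Ioo_subset_Icc_self ?_ hy
  rw [closure_Ioo zero_ne_one]

lemma u_eq_one_sub_treeSeries_div (c : ℝ) : u c = 1 - treeSeries (c * exp (-c)) / c := by
  have hterm (k : ℕ) : 1 / c * (((k : ℝ) + 1) ^ ((k : ℤ) - 1) / (k + 1)!) * (c * exp (-c)) ^ (k + 1)
      = treeCoeff (k + 1) * (c * exp (-c)) ^ (k + 1) / c := by
    have hk : (k : ℝ) + 1 ≠ 0 := by positivity
    rw [zpow_sub_one₀ hk, zpow_natCast, treeCoeff]
    push_cast
    field_simp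
    ring
  have hshift : ∑' k : ℕ, treeCoeff (k + 1) * (c * exp (-c)) ^ (k + 1) = treeSeries (c * exp (-c)) :=
    (add_left_injective 1).tsum_eq (f := fun n ↦ treeCoeff n * (c * exp (-c)) ^ n) fun n hn ↦ by
      rcases n with _ | k
      · simp [treeCoeff] at hn
      · exact ⟨k, rfl⟩
  rw [u, ← hshift, ← tsum_div_const]
  simp_rw [hterm]

lemma two_sub_mul_exp_lt {x : ℝ} (hx : 0 < x) : (2 - x) * exp x < 2 + x := by
  have hderiv (z : ℝ) : HasDerivAt (fun z ↦ (2 - z) * exp z - z) ((1 - z) * exp z - 1) z := by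
    have h := (((hasDerivAt_id' z).const_sub 2).mul (hasDerivAt_exp z)).sub (hasDerivAt_id' z)
    exact h.congr_deriv (by ring)
  have hanti : StrictAntiOn (fun z ↦ (2 - z) * exp z - z) (Set.Ici 0) := by
    refine strictAntiOn_of_deriv_neg (convex_Ici 0) (by fun_prop) fun z hz ↦ ?_
    rw [interior_Ici, Set.mem_Ioi] at hz
    have h := mul_lt_mul_of_pos_right (show 1 - z < exp (-z) by
      linarith [add_one_lt_exp (neg_ne_zero.2 hz.ne')]) (exp_pos z)
    rw [← exp_add, neg_add_cancel, exp_zero] at h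
    rw [(hderiv z).deriv]
    linarith
  have := hanti Set.self_mem_Ici hx.le hx
  simp only [exp_zero] at this
  linarith

lemma sub_sq_div_two_mul_exp_sub_one_lt {x : ℝ} (hx : 0 < x) :
    (x - x ^ 2 / 2) * (exp x - 1) < x ^ 2 := by
  nlinarith [two_sub_mul_exp_lt hx]

lemma sub_sq_div_two_mul_exp_sub_one_lt_of_mul_exp_neg_eq {x y : ℝ} (hy0 : 0 < y) (hy1 : y ≤ 1)
    (hx : 1 ≤ x) (hxy : y * exp (-y) = x * exp (-x)) : (y - y ^ 2 / 2) * (exp x - 1) < x ^ 2 := by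
  have hxy' : y * exp x = x * exp y := by
    rw [exp_neg, exp_neg] at hxy
    field_simp at hxy
    linarith
  nlinarith [two_sub_mul_exp_lt hy0, mul_nonneg (sub_nonneg.2 (hy1.trans hx))
    (show 0 ≤ 2 * x + y - 2 by linarith)]

lemma exists_mem_Ioc_mul_exp_neg_eq {x : ℝ} (hx : 1 ≤ x) :
    ∃ y ∈ Set.Ioc 0 1, y * exp (-y) = x * exp (-x) := by
  have hpos : 0 < x * exp (-x) := by positivity
  obtain ⟨y, hy, hyx⟩ := intermediate_value_Icc zero_le_one
    (f := fun z ↦ z * exp (-z)) (by fun_prop)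
    ⟨by simpa using hpos.le, by simpa using mul_exp_neg_le_exp_neg_one x⟩
  refine ⟨y, ⟨lt_of_le_of_ne hy.1 ?_, hy.2⟩, hyx⟩
  rintro rfl
  simp [← hyx] at hpos

lemma one_sub_div_exp_sub_one_lt_u {x y : ℝ} (hx : 0 < x) (hy : y ∈ Set.Icc 0 1)
    (hxy : y * exp (-y) = x * exp (-x)) (hlt : (y - y ^ 2 / 2) * (exp x - 1) < x ^ 2) :
    1 - x / (exp x - 1) < u x := by
  have hexp : 0 < exp x - 1 := by linarith [add_one_lt_exp hx.ne']
  rw [u_eq_one_sub_treeSeries_div, ← hxy, treeSeries_mul_exp_neg hy, sub_lt_sub_iff_left,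
    div_lt_div_iff₀ hx hexp]
  linarith

/-- `u(x) > 1 - x/(e^x - 1)` for every `x > 0`. -/
theorem statement10 : ∀ x : ℝ, 0 < x → 1 - x / (Real.exp x - 1) < u x := by
  intro x hx
  rcases lt_or_ge x 1 with hx1 | hx1
  · exact one_sub_div_exp_sub_one_lt_u hx ⟨hx.le, hx1.le⟩ rfl
      (sub_sq_div_two_mul_exp_sub_one_lt hx)
  · obtain ⟨y, hy, hxy⟩ := exists_mem_Ioc_mul_exp_neg_eq hx1
    exact one_sub_div_exp_sub_one_lt_u hx (Set.Ioc_subset_Icc_self hy) hxy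
      (sub_sq_div_two_mul_exp_sub_one_lt_of_mul_exp_neg_eq hy.1 hy.2 hx1 hxy)
end
end

section
/- For every 0 < c ≤ 1, Σ_{k=1}^∞ (k^{k−2}/k!)(c e^{−c})^k = c − c²/2; equivalently, u(c) = c/2 for all 0 < c ≤ 1. -/
open Filter Real

noncomputable section

namespace Statement12Aux

open Finset Real


lemma alt_sum : ∀ (n p : ℕ), p < n →
    ∑ m ∈ Finset.range (n+1), (-1:ℝ)^m * (n.choose m) * (m:ℝ)^p = 0 := by
  intro n
  induction n with
  | zero => omega
  | succ n ih =>
    intro p hp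
    cases p with
    | zero =>
      have h := Int.alternating_sum_range_choose_of_ne (n := n+1) (by omega)
      have := congrArg (fun z : ℤ => (z : ℝ)) h
      push_cast at this
      simpa using this
    | succ p =>
      rw [Finset.sum_range_succ']
      have key : ∀ i ∈ range (n+1), (-1:ℝ)^(i+1) * (((n+1).choose (i+1) : ℕ):ℝ) * (((i+1:ℕ)):ℝ)^(p+1)
          = (-(n+1:ℝ)) * ∑ q ∈ range (p+1), (p.choose q) * ((-1:ℝ)^i * (n.choose i) * (i:ℝ)^q) := by
        intro i _
        have hch : ((n+1).choose (i+1) : ℝ) * ((i:ℝ)+1) = (n+1) * (n.choose i) := by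
          have := congrArg (fun z : ℕ => (z : ℝ)) (Nat.add_one_mul_choose_eq n i)
          push_cast at this
          linarith [this]
        have hbin : ((i:ℝ)+1)^p = ∑ q ∈ range (p+1), (p.choose q) * (i:ℝ)^q := by
          rw [add_pow]
          exact Finset.sum_congr rfl fun q hq => by ring
        push_cast
        calc (-1:ℝ)^(i+1) * ((n+1).choose (i+1)) * ((i:ℝ)+1)^(p+1)
            = (-1:ℝ)^i * (-1) * ((((n+1).choose (i+1) : ℝ) * ((i:ℝ)+1)) * ((i:ℝ)+1)^p) := by ring
          _ = (-1:ℝ)^i * (-1) * (((n+1) * (n.choose i)) * ((i:ℝ)+1)^p) := by rw [hch]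
          _ = (-(n+1:ℝ)) * ((-1:ℝ)^i * (n.choose i) *
                (∑ q ∈ range (p+1), (p.choose q) * (i:ℝ)^q)) := by rw [← hbin]; ring
          _ = _ := by
              simp only [Finset.mul_sum]
              exact Finset.sum_congr rfl fun q _ => by ring
      rw [Finset.sum_congr rfl key, ← Finset.mul_sum]
      have h2 : ∑ i ∈ range (n+1), ∑ q ∈ range (p+1),
          (p.choose q:ℝ) * ((-1:ℝ)^i * (n.choose i) * (i:ℝ)^q) = 0 := by
        rw [Finset.sum_comm]
        refine Finset.sum_eq_zero fun q hq => ?_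
        have hq2 := Finset.mem_range.mp hq
        rw [← Finset.mul_sum, ih q (by omega), mul_zero]
      rw [h2]
      norm_num


noncomputable def bb (k : ℕ) : ℝ := ((k : ℝ) + 1) ^ ((k : ℤ) - 1) / (Nat.factorial (k + 1))

lemma bb_eq (k : ℕ) : bb k = ((k:ℝ)+1)^k * ((k:ℝ)+1)⁻¹ / (Nat.factorial (k+1)) := by
  have h : ((k:ℝ)+1) ≠ 0 := by positivity
  rw [bb, show ((k:ℤ) - 1) = (k:ℤ) + (-1) by ring, zpow_add₀ h, zpow_natCast, zpow_neg_one]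

lemma bb_nonneg (k : ℕ) : 0 ≤ bb k := by
  rw [bb_eq]; positivity

lemma bb_le (k : ℕ) : bb k ≤ Real.exp 1 ^ (k+1) / ((k:ℝ)+1)^2 := by
  have h : (0:ℝ) < (k:ℝ)+1 := by positivity
  have hf : (0:ℝ) < (Nat.factorial (k+1) : ℝ) := by
    exact_mod_cast Nat.factorial_pos (k+1)
  have hexp : Real.exp ((k:ℝ)+1) = Real.exp 1 ^ (k+1) := by
    rw [← Real.exp_nat_mul]; norm_num
  rw [bb_eq]
  rw [div_le_div_iff₀ hf (by positivity)] at *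
  calc ((k:ℝ)+1)^k * ((k:ℝ)+1)⁻¹ * ((k:ℝ)+1)^2 
      = ((k:ℝ)+1)^(k+1) := by field_simp; ring
    _ ≤ Real.exp ((k:ℝ)+1) * (Nat.factorial (k+1)) := by
        have := Real.pow_div_factorial_le_exp (x := (k:ℝ)+1) (by positivity) (k+1)
        rw [div_le_iff₀ hf] at this
        exact this
    _ = Real.exp 1 ^ (k+1) * (Nat.factorial (k+1)) := by rw [hexp]



noncomputable def A (n : ℕ) : ℝ :=
  ∑ p ∈ Finset.HasAntidiagonal.antidiagonal n, bb p.1 * (-(p.1:ℝ)-1)^p.2 / (Nat.factorial p.2)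

lemma A_zero : A 0 = 1 := by
  simp [A, bb]

lemma A_one : A 1 = -(1/2) := by
  rw [A, Finset.Nat.sum_antidiagonal_eq_sum_range_succ_mk, Finset.sum_range_succ,
    Finset.sum_range_one]
  norm_num [bb]


lemma A_ge2 (n : ℕ) (hn : 2 ≤ n) : A n = 0 := by
  rw [A, Finset.Nat.sum_antidiagonal_eq_sum_range_succ_mk]
  have key : ∀ k ∈ range (n+1), bb k * (-(k:ℝ)-1)^(n-k) / (Nat.factorial (n-k)) =
      ((-1:ℝ)^(n+1)/((Nat.factorial (n+1)) : ℝ)) *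
        ((-1:ℝ)^(k+1) * (((n+1).choose (k+1) : ℕ):ℝ) * (((k+1:ℕ)):ℝ)^(n-1)) := by
    intro k hk
    have hkn : k ≤ n := Nat.lt_succ_iff.mp (Finset.mem_range.mp hk)
    have h1 : (-(k:ℝ)-1)^(n-k) = (-1:ℝ)^(n-k) * ((k:ℝ)+1)^(n-k) := by
      rw [show -(k:ℝ)-1 = -((k:ℝ)+1) by ring, neg_pow]
    have hsign : (-1:ℝ)^(n-k) = (-1:ℝ)^(n+1) * (-1:ℝ)^(k+1) := by
      rw [← pow_add, show (n+1)+(k+1) = (n-k) + 2*(k+1) by omega, pow_add, pow_mul]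
      norm_num
    have hpow : ((k:ℝ)+1)^k * ((k:ℝ)+1)^(n-k) = ((k:ℝ)+1)^(n-1) * ((k:ℝ)+1) := by
      rw [← pow_add, ← pow_succ]
      congr 1
      omega
    have hfact : ((Nat.factorial (n+1) : ℕ):ℝ) =
        (((n+1).choose (k+1) : ℕ):ℝ) * ((Nat.factorial (k+1) : ℕ):ℝ) *
          ((Nat.factorial (n-k) : ℕ):ℝ) := by
      have h := Nat.choose_mul_factorial_mul_factorial (Nat.succ_le_succ hkn)
      rw [show n+1-(k+1) = n-k by omega] at h
      exact_mod_cast h.symm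
    have hne1 : ((Nat.factorial (k+1) : ℕ):ℝ) ≠ 0 := by
      exact_mod_cast (Nat.factorial_pos (k+1)).ne'
    have hne2 : ((Nat.factorial (n-k) : ℕ):ℝ) ≠ 0 := by
      exact_mod_cast (Nat.factorial_pos (n-k)).ne'
    have hk0 : ((k:ℝ)+1) ≠ 0 := by positivity
    have hC : (((n+1).choose (k+1) : ℕ):ℝ) ≠ 0 := by
      have := Nat.choose_pos (Nat.succ_le_succ hkn)
      exact_mod_cast this.ne'
    rw [bb_eq, h1, hsign, hfact]
    push_cast
    field_simp
    linear_combination hpow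
  rw [Finset.sum_congr rfl key, ← Finset.mul_sum]
  have h0 : ∑ k ∈ range (n+1), (-1:ℝ)^(k+1) * (((n+1).choose (k+1)):ℝ) * (((k+1:ℕ)):ℝ)^(n-1)
      = ∑ m ∈ range (n+2), (-1:ℝ)^m * (((n+1).choose m):ℝ) * (m:ℝ)^(n-1) := by
    conv_rhs => rw [Finset.sum_range_succ']
    have h00 : ((0:ℕ):ℝ)^(n-1) = 0 := by
      rw [show ((0:ℕ):ℝ) = 0 by norm_num, zero_pow]
      omega
    rw [h00]
    norm_num
  rw [h0, alt_sum (n+1) (n-1) (by omega), mul_zero]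


lemma exp_tsum (y : ℝ) : ∑' j : ℕ, y^j / (Nat.factorial j) = Real.exp y := by
  rw [Real.exp_eq_exp_ℝ, NormedSpace.exp_eq_tsum_div]

lemma summable_inv_sq : Summable (fun k : ℕ => 1/((k:ℝ)+1)^2) := by
  have h : Summable (fun n : ℕ => 1/(n:ℝ)^2) := by
    rw [Real.summable_one_div_nat_pow]
    norm_num
  have := (summable_nat_add_iff 1).mpr h
  refine this.congr fun k => ?_
  push_cast
  ring_nf

lemma bb_term_bound {x : ℝ} (h0 : 0 ≤ x) (k : ℕ) :
    bb k * x^(k+1) ≤ (Real.exp 1 * x)^(k+1) / ((k:ℝ)+1)^2 := by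
  have h := bb_le k
  have hx : (0:ℝ) ≤ x^(k+1) := by positivity
  calc bb k * x^(k+1) ≤ (Real.exp 1 ^ (k+1) / ((k:ℝ)+1)^2) * x^(k+1) :=
        mul_le_mul_of_nonneg_right h hx
    _ = (Real.exp 1 * x)^(k+1) / ((k:ℝ)+1)^2 := by rw [mul_pow]; ring

lemma bb_term_bound' {x : ℝ} (h0 : 0 ≤ x) (h1 : x ≤ Real.exp (-1)) (k : ℕ) :
    bb k * x^(k+1) ≤ 1/((k:ℝ)+1)^2 := by
  refine (bb_term_bound h0 k).trans ?_
  have he : Real.exp 1 * x ≤ 1 := by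
    have := mul_le_mul_of_nonneg_left h1 (Real.exp_pos 1).le
    rwa [← Real.exp_add, add_neg_cancel, Real.exp_zero] at this
  have he0 : 0 ≤ Real.exp 1 * x := by positivity
  have : (Real.exp 1 * x)^(k+1) ≤ 1 := pow_le_one₀ he0 he
  have hk : (0:ℝ) < ((k:ℝ)+1)^2 := by positivity
  calc (Real.exp 1 * x)^(k+1) / ((k:ℝ)+1)^2 ≤ 1/((k:ℝ)+1)^2 := by
        gcongr
  _ = 1/((k:ℝ)+1)^2 := rfl

lemma summable_S {x : ℝ} (h0 : 0 ≤ x) (h1 : x ≤ Real.exp (-1)) :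
    Summable (fun k : ℕ => bb k * x^(k+1)) := by
  refine Summable.of_nonneg_of_le (fun k => mul_nonneg (bb_nonneg k) (by positivity)) (bb_term_bound' h0 h1) ?_
  exact summable_inv_sq


lemma small_c (c : ℝ) (h0 : 0 < c) (h1 : c ≤ 1/8) :
    ∑' k : ℕ, bb k * (c * Real.exp (-c))^(k+1) = c - c^2/2 := by
  set F : ℕ × ℕ → ℝ := fun p =>
    bb p.1 * c^(p.1+1) * (((-(p.1:ℝ)-1) * c)^p.2 / (Nat.factorial p.2)) with hF
  have habs : ∀ p : ℕ × ℕ, |F p| = bb p.1 * c^(p.1+1) * ((((p.1:ℝ)+1) * c)^p.2 / (Nat.factorial p.2)) := by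
    rintro ⟨k, j⟩
    have h2 : |(-(k:ℝ)-1) * c| = ((k:ℝ)+1) * c := by
      rw [abs_mul, abs_of_pos h0]
      have hle : (-(k:ℝ)-1) ≤ 0 := by
        have : (0:ℝ) ≤ (k:ℝ) := Nat.cast_nonneg k
        linarith
      rw [abs_of_nonpos hle]; ring
    rw [hF]
    simp only [abs_mul, abs_div, abs_pow, h2, abs_of_nonneg (bb_nonneg k),
      abs_of_nonneg (pow_nonneg h0.le _), Nat.abs_cast]
  have hrow : ∀ k : ℕ, Summable (fun j => bb k * c^(k+1) * ((((k:ℝ)+1) * c)^j / (Nat.factorial j))) :=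
    fun k => (Real.summable_pow_div_factorial _).mul_left _
  have hrowsum : ∀ k : ℕ, ∑' j : ℕ, bb k * c^(k+1) * ((((k:ℝ)+1) * c)^j / (Nat.factorial j))
      = bb k * (c * Real.exp c)^(k+1) := by
    intro k
    rw [tsum_mul_left, exp_tsum]
    have : Real.exp (((k:ℝ)+1) * c) = Real.exp c ^ (k+1) := by
      rw [show ((k:ℝ)+1) = ((k+1:ℕ):ℝ) by push_cast; ring, Real.exp_nat_mul]
    rw [this, mul_pow]
    ring
  -- column sums are summable
  have hcolsum : Summable (fun k : ℕ => bb k * (c * Real.exp c)^(k+1)) := by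
    have hq0 : (0:ℝ) ≤ Real.exp 1 * (c * Real.exp c) := by positivity
    have hq1 : Real.exp 1 * (c * Real.exp c) < 1 := by
      have h2 : Real.exp c ≤ Real.exp 1 := Real.exp_le_exp.mpr (by linarith)
      have h3 : Real.exp 1 < 2.7182818286 := Real.exp_one_lt_d9
      have h4 : c * Real.exp c ≤ (1/8) * Real.exp 1 := by
        nlinarith [Real.exp_pos c, Real.exp_pos 1]
      have h5 : Real.exp 1 * (c * Real.exp c) ≤ Real.exp 1 * ((1/8) * Real.exp 1) := by
        nlinarith [Real.exp_pos 1]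
      nlinarith [Real.exp_pos 1]
    have hgeom : Summable (fun k : ℕ => (Real.exp 1 * (c * Real.exp c))^(k+1)) := by
      refine ((summable_geometric_of_lt_one hq0 hq1).mul_left
        (Real.exp 1 * (c * Real.exp c))).congr fun k => ?_
      rw [← pow_succ']
    refine Summable.of_nonneg_of_le
      (fun k => mul_nonneg (bb_nonneg k) (by positivity)) (fun k => ?_) hgeom
    refine (bb_term_bound (by positivity) k).trans ?_
    have hk1 : (1:ℝ) ≤ ((k:ℝ)+1)^2 := by nlinarith [Nat.cast_nonneg (α := ℝ) k]
    calc (Real.exp 1 * (c * Real.exp c))^(k+1) / ((k:ℝ)+1)^2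
        ≤ (Real.exp 1 * (c * Real.exp c))^(k+1) / 1 := by gcongr
      _ = (Real.exp 1 * (c * Real.exp c))^(k+1) := by rw [div_one]
  have habs_sum : Summable (fun p : ℕ × ℕ => |F p|) := by
    rw [show (fun p : ℕ × ℕ => |F p|) = fun p =>
      bb p.1 * c^(p.1+1) * ((((p.1:ℝ)+1) * c)^p.2 / (Nat.factorial p.2)) from funext habs]
    apply (summable_prod_of_nonneg ?_).mpr
    · exact ⟨fun k => hrow k, (hcolsum.congr fun k => (hrowsum k).symm)⟩
    · rintro ⟨k, j⟩
      have := bb_nonneg k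
      positivity
  have hFsum : Summable F := habs_sum.of_abs
  -- first evaluation : rows
  have hval1 : ∑' p : ℕ × ℕ, F p = ∑' k : ℕ, bb k * (c * Real.exp (-c))^(k+1) := by
    rw [hFsum.tsum_prod]
    refine tsum_congr fun k => ?_
    show (∑' j : ℕ, bb k * c^(k+1) * (((-(k:ℝ)-1) * c)^j / (Nat.factorial j))) = _
    rw [tsum_mul_left, exp_tsum ((-(k:ℝ)-1) * c)]
    have : Real.exp ((-(k:ℝ)-1) * c) = Real.exp (-c) ^ (k+1) := by
      rw [show (-(k:ℝ)-1) * c = ((k+1:ℕ):ℝ) * (-c) by push_cast; ring, Real.exp_nat_mul]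
    rw [this, mul_pow]
    ring
  -- second evaluation : diagonals
  have hsig : Summable (fun x : (Σ n : ℕ, ((Finset.HasAntidiagonal.antidiagonal n : Finset (ℕ × ℕ)) : Type)) =>
      F (Finset.HasAntidiagonal.sigmaAntidiagonalEquivProd x)) := by
    have := (Finset.HasAntidiagonal.sigmaAntidiagonalEquivProd.summable_iff (f := F)).mpr hFsum
    exact this
  have hval2 : ∑' p : ℕ × ℕ, F p = ∑' n : ℕ, A n * c^(n+1) := by
    rw [← Finset.HasAntidiagonal.sigmaAntidiagonalEquivProd.tsum_eq F, hsig.tsum_sigma]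
    refine tsum_congr fun n => ?_
    rw [show (∑' (x : ((Finset.HasAntidiagonal.antidiagonal n : Finset (ℕ × ℕ)) : Type)),
        F (Finset.HasAntidiagonal.sigmaAntidiagonalEquivProd ⟨n, x⟩)) = ∑ p ∈ Finset.HasAntidiagonal.antidiagonal n, F p
        from Finset.tsum_subtype _ F]
    rw [A, Finset.sum_mul]
    refine Finset.sum_congr rfl fun p hp => ?_
    have hpn : p.1 + p.2 = n := Finset.HasAntidiagonal.mem_antidiagonal.mp hp
    show bb p.1 * c^(p.1+1) * (((-(p.1:ℝ)-1) * c)^p.2 / (Nat.factorial p.2)) = _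
    rw [mul_pow]
    have : c^(p.1+1) * c^(p.2) = c^(n+1) := by
      rw [← pow_add]
      congr 1
      omega
    field_simp
    linear_combination (bb p.1 * (-(p.1:ℝ)-1)^p.2) * this
  -- evaluate the diagonal sum
  have hval3 : ∑' n : ℕ, A n * c^(n+1) = c - c^2/2 := by
    rw [tsum_eq_sum (s := {0, 1}) (fun n hn => ?_)]
    · rw [Finset.sum_insert (by norm_num), Finset.sum_singleton, A_zero, A_one]
      ring
    · have h2 : 2 ≤ n := by
        simp only [Finset.mem_insert, Finset.mem_singleton] at hn
        omega
      rw [A_ge2 n h2, zero_mul]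
  rw [← hval1, hval2, hval3]


def cf : ℕ → ℝ
  | 0 => 0
  | (k+1) => bb k

def ps : FormalMultilinearSeries ℝ ℝ ℝ := FormalMultilinearSeries.ofScalars ℝ cf

lemma x_mem {c : ℝ} (h0 : 0 ≤ c) (h1 : c ≤ 1) :
    0 ≤ c * Real.exp (-c) ∧ c * Real.exp (-c) ≤ Real.exp (-1) := by
  constructor
  · positivity
  · have h2 : c ≤ Real.exp (c - 1) := by linarith [Real.add_one_le_exp (c - 1)]
    calc c * Real.exp (-c) ≤ Real.exp (c-1) * Real.exp (-c) :=
          mul_le_mul_of_nonneg_right h2 (Real.exp_pos _).le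
      _ = Real.exp (-1) := by rw [← Real.exp_add]; ring_nf

lemma x_lt {c : ℝ} (h0 : 0 ≤ c) (h1 : c < 1) : c * Real.exp (-c) < Real.exp (-1) := by
  have h2 : c < Real.exp (c - 1) := by
    have := Real.add_one_lt_exp (sub_ne_zero.mpr (ne_of_lt h1))
    linarith
  calc c * Real.exp (-c) < Real.exp (c-1) * Real.exp (-c) := by
        have := Real.exp_pos (-c); nlinarith
    _ = Real.exp (-1) := by rw [← Real.exp_add]; ring_nf

lemma ps_radius : (Real.toNNReal (Real.exp (-1)) : ENNReal) ≤ ps.radius := by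
  apply FormalMultilinearSeries.le_radius_of_summable
  have hnorm : ∀ n, ‖ps n‖ = |cf n| := fun n => by
    rw [ps, FormalMultilinearSeries.ofScalars_norm]; rfl
  have hco : ((Real.toNNReal (Real.exp (-1)) : NNReal) : ℝ) = Real.exp (-1) :=
    Real.coe_toNNReal _ (Real.exp_pos _).le
  refine (summable_nat_add_iff 1).mp ?_
  refine Summable.of_nonneg_of_le (fun k => by positivity) (fun k => ?_) summable_inv_sq
  rw [hnorm, hco]
  show |bb k| * Real.exp (-1) ^ (k+1) ≤ 1/((k:ℝ)+1)^2
  rw [abs_of_nonneg (bb_nonneg k)]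
  exact bb_term_bound' (Real.exp_pos _).le le_rfl k

lemma gg_eq (x : ℝ) : ps.sum x = ∑' n : ℕ, cf n * x^n := by
  have := FormalMultilinearSeries.ofScalars_sum_eq (E := ℝ) cf x
  simpa [ps, FormalMultilinearSeries.ofScalarsSum, smul_eq_mul] using this

lemma gg_shift {x : ℝ} (h0 : 0 ≤ x) (h1 : x ≤ Real.exp (-1)) :
    ps.sum x = ∑' k : ℕ, bb k * x^(k+1) := by
  rw [gg_eq]
  have hs : Summable (fun n : ℕ => cf n * x^n) := by
    refine (summable_nat_add_iff 1).mp ?_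
    exact (summable_S h0 h1).congr fun k => rfl
  rw [hs.tsum_eq_zero_add]
  show cf 0 * x^0 + _ = _
  simp [cf]

lemma ps_radius_pos : 0 < ps.radius :=
  lt_of_lt_of_le (by simp [Real.toNNReal_pos.mpr (Real.exp_pos (-1))]) ps_radius

lemma Sfun_analytic : AnalyticOnNhd ℝ (fun c => ps.sum (c * Real.exp (-c)))
    (Set.Ioo (0:ℝ) 1) := by
  intro c hc
  obtain ⟨hc0, hc1⟩ := hc
  have hmem : c * Real.exp (-c) ∈ EMetric.ball (0:ℝ) ps.radius := by
    change edist (c * Real.exp (-c)) 0 < ps.radius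
    rw [edist_zero_right]
    refine lt_of_lt_of_le ?_ ps_radius
    have hlt : |c * Real.exp (-c)| < Real.exp (-1) := by
      rw [abs_of_nonneg (x_mem hc0.le hc1.le).1]
      exact x_lt hc0.le hc1
    have : ‖c * Real.exp (-c)‖₊ < Real.toNNReal (Real.exp (-1)) := by
      rw [← Real.toNNReal_coe (r := ‖c * Real.exp (-c)‖₊),
        Real.toNNReal_lt_toNNReal_iff (Real.exp_pos _)]
      rw [coe_nnnorm, Real.norm_eq_abs]
      exact hlt
    exact_mod_cast this
  have hg : AnalyticAt ℝ ps.sum (c * Real.exp (-c)) :=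
    (ps.hasFPowerSeriesOnBall ps_radius_pos).analyticAt_of_mem hmem
  have hinner : AnalyticAt ℝ (fun c : ℝ => c * Real.exp (-c)) c :=
    (analyticAt_id).mul (analyticAt_rexp.comp (analyticAt_id.neg))
  have := AnalyticAt.comp (g := ps.sum) (f := fun c : ℝ => c * Real.exp (-c)) hg hinner
  exact this

lemma poly_analytic : AnalyticOnNhd ℝ (fun c : ℝ => c - c^2/2) (Set.Ioo (0:ℝ) 1) := by
  intro c _
  have : AnalyticAt ℝ (fun c : ℝ => c - c^2 * (1/2)) c :=
    (analyticAt_id).sub ((analyticAt_id.pow 2).mul analyticAt_const)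
  refine this.congr ?_
  filter_upwards with y
  ring

lemma eq_on_Ioo : Set.EqOn (fun c => ps.sum (c * Real.exp (-c)))
    (fun c : ℝ => c - c^2/2) (Set.Ioo (0:ℝ) 1) := by
  refine AnalyticOnNhd.eqOn_of_preconnected_of_eventuallyEq Sfun_analytic poly_analytic
    isPreconnected_Ioo (z₀ := 1/16) (by norm_num) ?_
  have hmem : Set.Ioo (0:ℝ) (1/8) ∈ nhds (1/16 : ℝ) := Ioo_mem_nhds (by norm_num) (by norm_num)
  filter_upwards [hmem] with y hy
  obtain ⟨hy0, hy8⟩ := hy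
  have hx := x_mem hy0.le (by linarith)
  rw [gg_shift hx.1 hx.2, small_c y hy0 (by linarith)]

def mfun : ℝ → ℝ := fun c => max 0 (min (c * Real.exp (-c)) (Real.exp (-1)))

lemma mfun_cont : Continuous mfun :=
  continuous_const.max ((continuous_id.mul (Real.continuous_exp.comp continuous_neg)).min
    continuous_const)

lemma mfun_mem (c : ℝ) : 0 ≤ mfun c ∧ mfun c ≤ Real.exp (-1) := by
  refine ⟨le_max_left _ _, max_le (Real.exp_pos _).le (min_le_right _ _)⟩

lemma mfun_eq {c : ℝ} (h0 : 0 ≤ c) (h1 : c ≤ 1) : mfun c = c * Real.exp (-c) := by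
  obtain ⟨ha, hb⟩ := x_mem h0 h1
  rw [mfun, min_eq_left hb, max_eq_right ha]

def W : ℝ → ℝ := fun c => ∑' k : ℕ, bb k * (mfun c)^(k+1)

lemma W_cont : Continuous W := by
  refine continuous_tsum (f := fun (k : ℕ) (c : ℝ) => bb k * (mfun c)^(k+1)) (fun k => ?_)
    summable_inv_sq (fun k x => ?_)
  · exact continuous_const.mul (mfun_cont.pow (k+1))
  · have h := mfun_mem x
    rw [Real.norm_eq_abs, abs_of_nonneg (mul_nonneg (bb_nonneg k) (pow_nonneg h.1 _))]
    exact bb_term_bound' h.1 h.2 k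

lemma W_eq_on_Icc : ∀ c ∈ Set.Icc (0:ℝ) 1, W c = c - c^2/2 := by
  have h1 : Set.EqOn W (fun c : ℝ => c - c^2/2) (Set.Ioo 0 1) := by
    intro c hc
    have hx := x_mem hc.1.le hc.2.le
    show W c = _
    rw [W, mfun_eq hc.1.le hc.2.le, ← gg_shift hx.1 hx.2]
    exact eq_on_Ioo hc
  have h2 := h1.closure W_cont (by continuity)
  intro c hc
  have hcl : c ∈ closure (Set.Ioo (0:ℝ) 1) := by
    rw [closure_Ioo (by norm_num : (0:ℝ) ≠ 1)]
    exact hc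
  exact h2 hcl

theorem final (c : ℝ) (hc : 0 < c) (hc1 : c ≤ 1) :
    (∑' k : ℕ, bb k * (c * Real.exp (-c)) ^ (k + 1) = c - c ^ 2 / 2) ∧
      1 - (∑' k : ℕ, (1 / c) * bb k * (c * Real.exp (-c)) ^ (k + 1)) = c / 2 := by
  have hsum : ∑' k : ℕ, bb k * (c * Real.exp (-c))^(k+1) = c - c^2/2 := by
    have hW := W_eq_on_Icc c ⟨hc.le, hc1⟩
    rw [W, mfun_eq hc.le hc1] at hW
    exact hW
  refine ⟨hsum, ?_⟩
  have hre : ∑' k : ℕ, (1/c) * bb k * (c * Real.exp (-c))^(k+1)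
      = (1/c) * ∑' k : ℕ, bb k * (c * Real.exp (-c))^(k+1) := by
    rw [← tsum_mul_left]
    exact tsum_congr fun k => by ring
  rw [hre, hsum]
  field_simp
  ring


end Statement12Aux

/-- for `0 < c ≤ 1`, `Σ_{k≥1} (k^{k-2}/k!)(c e^{-c})^k = c - c²/2`;
equivalently `u(c) = c/2`. -/
theorem statement12 (c : ℝ) (hc : 0 < c) (hc1 : c ≤ 1) :
    (∑' k : ℕ, (((k : ℝ) + 1) ^ ((k : ℤ) - 1) / (Nat.factorial (k + 1))) *
        (c * Real.exp (-c)) ^ (k + 1) = c - c ^ 2 / 2) ∧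
      u c = c / 2 := by
  have h := Statement12Aux.final c hc hc1
  exact ⟨h.1, h.2⟩
end
end
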